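/- arXiv:1312.5556 — 4 statements merged into one kernel-verified Lean document; each statement's English description precedes it below -/
import Mathlib

section
/- Let 𝒯 be a hierarchy on a finite set V, let S₀ ⊆ V, and let p_adj^{C,(b)} : Ω → [0,1] (C ∈ 𝒯, b = 1,…,B) be random variables on a probability space (Ω, ℱ, ℙ). Assume there is a measurable event A with ℙ(A) ≥ (1−δ)^B (where δ ∈ (0,1)) such that for every b ∈ {1,…,B} and every t ∈ (0,1), ∑_{C ∈ 𝒯̃₀} ℙ({p_adj^{C,(b)} ≤ t} ∩ A) ≤ t. Then for every fixed γ ∈ (0,1) and every significance level α ∈ (0,1), the hierarchically adjusted aggregated p-values Q_h^C(γ) control the familywise error rate: ℙ(∃ C ∈ 𝒯₀ with Q_h^C(γ) ≤ α) ≤ α + 1 − (1−δ)^B ≤ α + Bδ. -/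
open MeasureTheory Finset

/-- A hierarchy on a finite set `V`: a finite collection of nonempty subsets of `V`
containing `V` itself, such that any two members are nested or disjoint. -/
def IsHierarchy {ι : Type*} [DecidableEq ι] (V : Finset ι) (𝒯 : Finset (Finset ι)) : Prop :=
  V ∈ 𝒯 ∧ (∀ C ∈ 𝒯, C.Nonempty ∧ C ⊆ V) ∧
    ∀ C ∈ 𝒯, ∀ D ∈ 𝒯, C ⊆ D ∨ D ⊆ C ∨ C ∩ D = ∅

/-- The null clusters: members of the hierarchy not meeting the active set `S₀`. -/
def nullClusters {ι : Type*} [DecidableEq ι] (𝒯 : Finset (Finset ι)) (S₀ : Finset ι) :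
    Finset (Finset ι) :=
  𝒯.filter (fun C => C ∩ S₀ = ∅)

/-- The maximal null clusters: null clusters which are not strictly contained
in another null cluster. -/
def maxNullClusters {ι : Type*} [DecidableEq ι] (𝒯 : Finset (Finset ι)) (S₀ : Finset ι) :
    Finset (Finset ι) :=
  (nullClusters 𝒯 S₀).filter (fun C => ∀ D ∈ nullClusters 𝒯 S₀, ¬ C ⊂ D)

/-- The empirical `γ`-quantile of `a 1, …, a B`: the `⌈γ B⌉`-th smallest of the values. -/
noncomputable def empQuantile (γ : ℝ) {B : ℕ} (a : Fin B → ℝ) : ℝ :=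
  sInf {x : ℝ | ⌈γ * B⌉₊ ≤ (Finset.univ.filter (fun b => a b ≤ x)).card}

/-- The aggregated p-value `Q^C(γ) = min (1, q_γ({p_adj^{C,(b)}/γ}))`. -/
noncomputable def Qagg {ι : Type*} {Ω : Type*} {B : ℕ}
    (p : Finset ι → Fin B → Ω → ℝ) (γ : ℝ) (C : Finset ι) (ω : Ω) : ℝ :=
  min 1 (empQuantile γ (fun b => p C b ω / γ))

/-- The hierarchically adjusted aggregated p-value
`Q_h^C(γ) = max {Q^D(γ) : D ∈ 𝒯, C ⊆ D}` (for `C ∈ 𝒯`). -/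
noncomputable def Qhier {ι : Type*} [DecidableEq ι] {Ω : Type*} {B : ℕ}
    (𝒯 : Finset (Finset ι)) (p : Finset ι → Fin B → Ω → ℝ) (γ : ℝ)
    (C : Finset ι) (ω : Ω) : ℝ :=
  (insert C (𝒯.filter (fun D => C ⊆ D))).sup' (Finset.insert_nonempty _ _)
    (fun D => Qagg p γ D ω)

open scoped ENNReal

/-!
If some null cluster `C` has `Q_h^C(γ) ≤ α`, then so does `Q^D(γ)` for a maximal null cluster
`D ⊇ C`, i.e. at least `⌈γB⌉` of the `B` p-values `p^{D,(b)}` are `≤ γα`. Markov's inequality for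
the number of such `b` bounds `⌈γB⌉ ℙ(· ∩ A)` by `∑_b ℙ({p^{D,(b)} ≤ γα} ∩ A)`; summing over the
maximal null clusters and using the summed superuniformity for each `b` gives at most
`B γ α / ⌈γB⌉ ≤ α` on `A`, while `Aᶜ` costs at most `1 - (1 - δ)^B`. Bernoulli's inequality gives
the final bound.
-/

theorem ceil_mul_le_card_filter_le_of_empQuantile_le {γ y : ℝ} {B : ℕ} {a : Fin B → ℝ}
    (hγ : γ ≤ 1) (hq : empQuantile γ a ≤ y) : ⌈γ * B⌉₊ ≤ #{b | a b ≤ y} := by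
  have hkB : ⌈γ * B⌉₊ ≤ B := Nat.ceil_le.2 (mul_le_of_le_one_left B.cast_nonneg hγ)
  by_contra! hlt
  set S : Set ℝ := {x | ⌈γ * B⌉₊ ≤ #{b | a b ≤ x}}
  have hS : S.Nonempty := by
    obtain ⟨M, hM⟩ := (Set.finite_range a).bddAbove
    refine ⟨M, ?_⟩
    rw [Set.mem_ofPred_eq, filter_true_of_mem fun b _ => hM ⟨b, rfl⟩, card_univ, Fintype.card_fin]
    exact hkB
  have hF : ({b | y < a b} : Finset (Fin B)).Nonempty := by
    by_contra! hF
    rw [filter_true_of_mem fun b _ => not_lt.1 (filter_eq_empty_iff.1 hF (mem_univ b)),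
      card_univ, Fintype.card_fin] at hlt
    exact hlt.not_ge hkB
  obtain ⟨b₀, hb₀, hmin⟩ := exists_min_image _ a hF
  -- every `x` below the smallest value exceeding `y` counts only the values `≤ y`
  have hb₀S : a b₀ ≤ sInf S := le_csInf hS fun x hx => by
    by_contra! hx₀
    refine hlt.not_ge (hx.trans (card_le_card fun b hb => ?_))
    simp only [mem_filter, mem_univ, true_and] at hb ⊢
    exact not_lt.1 fun hyb => (hmin b (by simpa using hyb)).not_gt (hb.trans_lt hx₀)
  exact (mem_filter.1 hb₀).2.not_ge (hb₀S.trans hq)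

theorem ceil_mul_le_card_filter_le_of_Qagg_le {ι Ω : Type*} {B : ℕ}
    {p : Finset ι → Fin B → Ω → ℝ} {γ α : ℝ} {C : Finset ι} {ω : Ω}
    (hγ₀ : 0 < γ) (hγ₁ : γ ≤ 1) (hα : α < 1) (h : Qagg p γ C ω ≤ α) :
    ⌈γ * B⌉₊ ≤ #{b | p C b ω ≤ γ * α} := by
  have hq : empQuantile γ (fun b => p C b ω / γ) ≤ α :=
    (min_le_iff.1 h).resolve_left hα.not_ge
  simpa only [div_le_iff₀' hγ₀] using ceil_mul_le_card_filter_le_of_empQuantile_le hγ₁ hq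

theorem Qagg_le_Qhier {ι Ω : Type*} [DecidableEq ι] {B : ℕ} {𝒯 : Finset (Finset ι)}
    (p : Finset ι → Fin B → Ω → ℝ) (γ : ℝ) {C D : Finset ι} (hD : D ∈ 𝒯) (hCD : C ⊆ D) (ω : Ω) :
    Qagg p γ D ω ≤ Qhier 𝒯 p γ C ω :=
  le_sup' (fun D => Qagg p γ D ω) (mem_insert_of_mem (mem_filter.2 ⟨hD, hCD⟩))

theorem mem_of_mem_maxNullClusters {ι : Type*} [DecidableEq ι] {𝒯 : Finset (Finset ι)}
    {S₀ D : Finset ι} (hD : D ∈ maxNullClusters 𝒯 S₀) : D ∈ 𝒯 :=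
  (mem_filter.1 (mem_filter.1 hD).1).1

theorem exists_mem_maxNullClusters_superset {ι : Type*} [DecidableEq ι]
    {𝒯 : Finset (Finset ι)} {S₀ C : Finset ι} (hC : C ∈ nullClusters 𝒯 S₀) :
    ∃ D ∈ maxNullClusters 𝒯 S₀, C ⊆ D := by
  obtain ⟨D, hCD, hD⟩ := exists_le_maximal _ hC
  exact ⟨D, mem_filter.2 ⟨hD.1, fun D' hD' hlt => hlt.2 (hD.2 hD' hlt.1)⟩, hCD⟩

theorem natCast_mul_measure_setOf_le_card_le_sum {Ω : Type*} [MeasurableSpace Ω] (μ : Measure Ω)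
    {β : Type*} [Fintype β] {s : β → Set Ω} [∀ ω b, Decidable (ω ∈ s b)]
    (hs : ∀ b, MeasurableSet (s b)) (k : ℕ) :
    k * μ {ω | k ≤ #{b | ω ∈ s b}} ≤ ∑ b, μ (s b) := by
  set f : Ω → ℝ≥0∞ := fun ω => ∑ b, (s b).indicator 1 ω
  have hf : ∀ ω, f ω = #{b | ω ∈ s b} := fun ω => by
    simp [f, Set.indicator_apply]
  calc (k : ℝ≥0∞) * μ {ω | k ≤ #{b | ω ∈ s b}} = k * μ {ω | (k : ℝ≥0∞) ≤ f ω} := by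
        simp only [hf, Nat.cast_le]
    _ ≤ ∫⁻ ω, f ω ∂μ :=
        mul_meas_ge_le_lintegral₀ (by fun_prop (disch := exact hs _)) _
    _ = ∑ b, μ (s b) := by
        simp only [f]
        rw [lintegral_finsetSum _ fun b _ => measurable_one.indicator (hs b)]
        simp only [lintegral_indicator_one (hs _)]

theorem natCast_mul_sum_measure_inter_le {Ω κ : Type*} [MeasurableSpace Ω] (μ : Measure Ω)
    {B : ℕ} (𝒟 : Finset κ) {s : κ → Fin B → Set Ω} [∀ D ω b, Decidable (ω ∈ s D b)]
    (hs : ∀ D ∈ 𝒟, ∀ b, MeasurableSet (s D b)) {A : Set Ω} (hA : MeasurableSet A)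
    {ε : ℝ≥0∞} (hε : ∀ b, ∑ D ∈ 𝒟, μ (s D b ∩ A) ≤ ε) (k : ℕ) :
    k * ∑ D ∈ 𝒟, μ ({ω | k ≤ #{b | ω ∈ s D b}} ∩ A) ≤ B * ε :=
  calc k * ∑ D ∈ 𝒟, μ ({ω | k ≤ #{b | ω ∈ s D b}} ∩ A)
      ≤ ∑ D ∈ 𝒟, ∑ b, μ (s D b ∩ A) := by
        rw [mul_sum]
        refine sum_le_sum fun D hD => ?_
        simpa only [Measure.restrict_apply' hA] using
          natCast_mul_measure_setOf_le_card_le_sum (μ.restrict A) (hs D hD) k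
    _ = ∑ b, ∑ D ∈ 𝒟, μ (s D b ∩ A) := sum_comm
    _ ≤ ∑ _b : Fin B, ε := sum_le_sum fun b _ => hε b
    _ = B * ε := by simp

theorem natCast_mul_ofReal_mul_le_ceil_mul {γ α : ℝ} (hα : 0 ≤ α) (B : ℕ) :
    (B : ℝ≥0∞) * ENNReal.ofReal (γ * α) ≤ ⌈γ * B⌉₊ * ENNReal.ofReal α := by
  rw [← ENNReal.ofReal_natCast, ← ENNReal.ofReal_natCast ⌈γ * B⌉₊,
    ← ENNReal.ofReal_mul B.cast_nonneg, ← ENNReal.ofReal_mul (Nat.cast_nonneg _)]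
  refine ENNReal.ofReal_le_ofReal ?_
  rw [← mul_assoc, mul_comm (B : ℝ) γ]
  exact mul_le_mul_of_nonneg_right (Nat.le_ceil _) hα

theorem prob_compl_le_ofReal_one_sub {Ω : Type*} [MeasurableSpace Ω] {μ : Measure Ω}
    [IsProbabilityMeasure μ] {A : Set Ω} (hA : MeasurableSet A) {r : ℝ} (hr : 0 ≤ r)
    (h : ENNReal.ofReal r ≤ μ A) : μ Aᶜ ≤ ENNReal.ofReal (1 - r) := by
  rw [prob_compl_eq_one_sub hA, ENNReal.ofReal_sub _ hr, ENNReal.ofReal_one]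
  exact tsub_le_tsub_left h 1

theorem one_sub_one_sub_pow_le {δ : ℝ} (hδ : δ ≤ 2) (n : ℕ) : 1 - (1 - δ) ^ n ≤ n * δ := by
  have := one_add_mul_le_pow (a := -δ) (by linarith) n
  rw [← sub_eq_add_neg] at this
  linarith

theorem fwer_control_Qhier_general
    {ι : Type*} [DecidableEq ι] {Ω : Type*} [MeasurableSpace Ω]
    (ℙ : Measure Ω) [IsProbabilityMeasure ℙ]
    (S₀ : Finset ι) (𝒯 : Finset (Finset ι))
    {B : ℕ} (hB : 1 ≤ B) (p : Finset ι → Fin B → Ω → ℝ)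
    (hmeas : ∀ C ∈ 𝒯, ∀ b : Fin B, Measurable (p C b))
    {δ : ℝ} (hδ : δ ∈ Set.Ioo (0 : ℝ) 1)
    (A : Set Ω) (hA : MeasurableSet A)
    (hPA : ENNReal.ofReal ((1 - δ) ^ B) ≤ ℙ A)
    (hsuper : ∀ b : Fin B, ∀ t ∈ Set.Ioo (0 : ℝ) 1,
      ∑ C ∈ maxNullClusters 𝒯 S₀, ℙ ({ω | p C b ω ≤ t} ∩ A) ≤ ENNReal.ofReal t)
    {γ α : ℝ} (hγ : γ ∈ Set.Ioo (0 : ℝ) 1) (hα : α ∈ Set.Ioo (0 : ℝ) 1) :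
    ℙ {ω | ∃ C ∈ nullClusters 𝒯 S₀, Qhier 𝒯 p γ C ω ≤ α}
        ≤ ENNReal.ofReal (α + 1 - (1 - δ) ^ B)
      ∧ α + 1 - (1 - δ) ^ B ≤ α + B * δ := by
  obtain ⟨hγ₀, hγ₁⟩ := hγ
  obtain ⟨hα₀, hα₁⟩ := hα
  have hδ₁ : 0 ≤ 1 - δ := by linarith [hδ.2]
  set F := {ω | ∃ C ∈ nullClusters 𝒯 S₀, Qhier 𝒯 p γ C ω ≤ α}
  set E : Finset ι → Set Ω := fun D => {ω | ⌈γ * B⌉₊ ≤ #{b | p D b ω ≤ γ * α}}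
  have hFE : F ⊆ ⋃ D ∈ maxNullClusters 𝒯 S₀, E D := by
    rintro ω ⟨C, hC, hQ⟩
    obtain ⟨D, hD, hCD⟩ := exists_mem_maxNullClusters_superset hC
    exact Set.mem_biUnion hD <| ceil_mul_le_card_filter_le_of_Qagg_le hγ₀ hγ₁.le hα₁
      ((Qagg_le_Qhier p γ (mem_of_mem_maxNullClusters hD) hCD ω).trans hQ)
  have hE : ∑ D ∈ maxNullClusters 𝒯 S₀, ℙ (E D ∩ A) ≤ ENNReal.ofReal α := by
    have hk : (⌈γ * B⌉₊ : ℝ≥0∞) ≠ 0 := by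
      simpa using mul_pos hγ₀ (Nat.cast_pos.2 hB)
    refine (ENNReal.mul_le_mul_iff_right hk (ENNReal.natCast_ne_top _)).1 ?_
    calc _ ≤ B * ENNReal.ofReal (γ * α) :=
          natCast_mul_sum_measure_inter_le ℙ _ (s := fun D b => {ω | p D b ω ≤ γ * α})
            (fun D hD b => measurableSet_le (hmeas D (mem_of_mem_maxNullClusters hD) b)
              measurable_const) hA
            (fun b => hsuper b _ ⟨mul_pos hγ₀ hα₀,
              mul_lt_one_of_nonneg_of_lt_one_left hγ₀.le hγ₁ hα₁.le⟩) _
      _ ≤ _ := natCast_mul_ofReal_mul_le_ceil_mul hα₀.le B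
  refine ⟨?_, by linarith [one_sub_one_sub_pow_le (by linarith [hδ.2]) B]⟩
  calc ℙ F ≤ ℙ (F ∩ A) + ℙ (F \ A) := measure_le_inter_add_sdiff _ _ _
    _ ≤ ℙ (⋃ D ∈ maxNullClusters 𝒯 S₀, E D ∩ A) + ℙ Aᶜ := by
        rw [← Set.iUnion₂_inter]
        exact add_le_add (measure_mono (Set.inter_subset_inter_left A hFE))
          (measure_mono (Set.sdiff_subset_compl _ _))
    _ ≤ ENNReal.ofReal α + ENNReal.ofReal (1 - (1 - δ) ^ B) :=
        add_le_add ((measure_biUnion_finset_le _ _).trans hE)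
          (prob_compl_le_ofReal_one_sub hA (pow_nonneg hδ₁ B) hPA)
    _ = ENNReal.ofReal (α + 1 - (1 - δ) ^ B) := by
        rw [← ENNReal.ofReal_add hα₀.le (sub_nonneg.2 (pow_le_one₀ hδ₁ (by linarith [hδ.1])))]
        ring_nf

/-- **FWER control of the hierarchically adjusted aggregated p-values `Q_h^C(γ)`**
(Theorem 1, part 1, of Mandozzi–Bühlmann). -/
theorem fwer_control_Qhier
    {ι : Type*} [DecidableEq ι] {Ω : Type*} [MeasurableSpace Ω]
    (ℙ : Measure Ω) [IsProbabilityMeasure ℙ]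
    (V S₀ : Finset ι) (𝒯 : Finset (Finset ι))
    (h𝒯 : IsHierarchy V 𝒯) (hS₀ : S₀ ⊆ V)
    {B : ℕ} (hB : 1 ≤ B) (p : Finset ι → Fin B → Ω → ℝ)
    (hmeas : ∀ C ∈ 𝒯, ∀ b : Fin B, Measurable (p C b))
    (hp01 : ∀ C ∈ 𝒯, ∀ (b : Fin B) (ω : Ω), p C b ω ∈ Set.Icc (0 : ℝ) 1)
    {δ : ℝ} (hδ : δ ∈ Set.Ioo (0 : ℝ) 1)
    (A : Set Ω) (hA : MeasurableSet A)
    (hPA : ENNReal.ofReal ((1 - δ) ^ B) ≤ ℙ A)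
    (hsuper : ∀ b : Fin B, ∀ t ∈ Set.Ioo (0 : ℝ) 1,
      ∑ C ∈ maxNullClusters 𝒯 S₀, ℙ ({ω | p C b ω ≤ t} ∩ A) ≤ ENNReal.ofReal t)
    {γ α : ℝ} (hγ : γ ∈ Set.Ioo (0 : ℝ) 1) (hα : α ∈ Set.Ioo (0 : ℝ) 1) :
    ℙ {ω | ∃ C ∈ nullClusters 𝒯 S₀, Qhier 𝒯 p γ C ω ≤ α}
        ≤ ENNReal.ofReal (α + 1 - (1 - δ) ^ B)
      ∧ α + 1 - (1 - δ) ^ B ≤ α + B * δ :=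
  fwer_control_Qhier_general ℙ S₀ 𝒯 hB p hmeas hδ A hA hPA hsuper hγ hα
end

section
/- Let 𝒯 be a binary hierarchy on a finite set V, let S₀ ⊆ V, let 𝒯̃₀ be the maximal null clusters, and let Ŝ ⊆ V be any nonempty subset. Then the effective cluster sizes restricted to Ŝ of the maximal null clusters meeting Ŝ sum to at most |Ŝ|: ∑_{C ∈ 𝒯̃₀, C ∩ Ŝ ≠ ∅} |C|_eff^{Ŝ} ≤ |Ŝ|. -/
open Finset

/-- The children of a cluster `C` in the hierarchy `𝒯`: the clusters whose parent
(smallest member of `𝒯` strictly containing them) is `C`. -/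
def children {ι : Type*} [DecidableEq ι] (𝒯 : Finset (Finset ι)) (C : Finset ι) :
    Finset (Finset ι) :=
  𝒯.filter (fun D => D ⊂ C ∧ ∀ E ∈ 𝒯, D ⊂ E → C ⊆ E)

/-- The siblings of a cluster `C`: the children of the parent of `C` other than `C`. -/
def siblings {ι : Type*} [DecidableEq ι] (𝒯 : Finset (Finset ι)) (C : Finset ι) :
    Finset (Finset ι) :=
  (𝒯.filter (fun P => C ∈ children 𝒯 P)).biUnion (fun P => (children 𝒯 P).erase C)

/-- The children of the siblings of `C` (as a collection of clusters, empty if `C` has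
no parent). -/
def childrenOfSiblings {ι : Type*} [DecidableEq ι] (𝒯 : Finset (Finset ι)) (C : Finset ι) :
    Finset (Finset ι) :=
  (siblings 𝒯 C).biUnion (fun D => children 𝒯 D)

/-- The hierarchy `𝒯` is binary: every non-minimal cluster has exactly two children,
which are disjoint with union the cluster itself. -/
def IsBinary {ι : Type*} [DecidableEq ι] (𝒯 : Finset (Finset ι)) : Prop :=
  ∀ C ∈ 𝒯, (∃ D ∈ 𝒯, D ⊂ C) →
    ∃ D₁ ∈ 𝒯, ∃ D₂ ∈ 𝒯, D₁ ≠ D₂ ∧ children 𝒯 C = {D₁, D₂} ∧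
      D₁ ∩ D₂ = ∅ ∧ D₁ ∪ D₂ = C

/-- The effective cluster size of `C` restricted to the screened set `Shat`:
`|C ∩ Shat|` if some child of a sibling of `C` meets `Shat`, and
`|C ∩ Shat| + |(⋃ si(C)) ∩ Shat|` otherwise. -/
def effSize {ι : Type*} [DecidableEq ι] (𝒯 : Finset (Finset ι)) (Shat : Finset ι)
    (C : Finset ι) : ℕ :=
  if ∃ E ∈ childrenOfSiblings 𝒯 C, (E ∩ Shat).Nonempty then (C ∩ Shat).card
  else (C ∩ Shat).card + (((siblings 𝒯 C).biUnion id) ∩ Shat).card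
section Aux

variable {ι : Type*} [DecidableEq ι]

lemma hier_nested {V : Finset ι} {𝒯 : Finset (Finset ι)} (h : IsHierarchy V 𝒯)
    {C D : Finset ι} (hC : C ∈ 𝒯) (hD : D ∈ 𝒯) (hne : (C ∩ D).Nonempty) :
    C ⊆ D ∨ D ⊆ C := by
  rcases h.2.2 C hC D hD with h' | h' | h'
  · exact Or.inl h'
  · exact Or.inr h'
  · rw [h'] at hne; simp at hne

lemma mem_children_iff {𝒯 : Finset (Finset ι)} {C P : Finset ι} :
    C ∈ children 𝒯 P ↔ C ∈ 𝒯 ∧ C ⊂ P ∧ ∀ E ∈ 𝒯, C ⊂ E → P ⊆ E := by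
  simp [children, and_assoc]

lemma exists_parent {V : Finset ι} {𝒯 : Finset (Finset ι)} (h : IsHierarchy V 𝒯)
    {C : Finset ι} (hC : C ∈ 𝒯) (hCV : C ≠ V) : ∃ P ∈ 𝒯, C ∈ children 𝒯 P := by
  have hsub : C ⊂ V := ((h.2.1 C hC).2).ssubset_of_ne hCV
  obtain ⟨P, hP, hmin⟩ := (𝒯.filter (fun D => C ⊂ D)).exists_min_image Finset.card
    ⟨V, by simp [h.1, hsub]⟩
  rw [mem_filter] at hP
  refine ⟨P, hP.1, mem_children_iff.2 ⟨hC, hP.2, fun E hE hCE => ?_⟩⟩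
  obtain ⟨x, hx⟩ := (h.2.1 C hC).1
  rcases hier_nested h hP.1 hE ⟨x, mem_inter.2 ⟨hP.2.subset hx, hCE.subset hx⟩⟩ with h' | h'
  · exact h'
  · have hEP : E = P := Finset.eq_of_subset_of_card_le h' (hmin E (mem_filter.2 ⟨hE, hCE⟩))
    rw [hEP]

lemma parent_unique {𝒯 : Finset (Finset ι)} {C P P' : Finset ι}
    (hP : C ∈ children 𝒯 P) (hP' : C ∈ children 𝒯 P')
    (hPmem : P ∈ 𝒯) (hP'mem : P' ∈ 𝒯) : P = P' := by
  obtain ⟨_, h1, h2⟩ := mem_children_iff.1 hP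
  obtain ⟨_, h1', h2'⟩ := mem_children_iff.1 hP'
  exact Finset.Subset.antisymm (h2 P' hP'mem h1') (h2' P hPmem h1)

lemma siblings_eq {𝒯 : Finset (Finset ι)} {C P : Finset ι} (hPmem : P ∈ 𝒯)
    (hCP : C ∈ children 𝒯 P) : siblings 𝒯 C = (children 𝒯 P).erase C := by
  have hfil : 𝒯.filter (fun Q => C ∈ children 𝒯 Q) = {P} := by
    ext Q
    simp only [mem_filter, mem_singleton]
    constructor
    · rintro ⟨hQ, hCQ⟩; exact parent_unique hCQ hCP hQ hPmem
    · rintro rfl; exact ⟨hPmem, hCP⟩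
  rw [siblings, hfil, singleton_biUnion]

lemma siblings_V {V : Finset ι} {𝒯 : Finset (Finset ι)} (h : IsHierarchy V 𝒯) :
    siblings 𝒯 V = ∅ := by
  rw [siblings]
  have hfil : 𝒯.filter (fun P => V ∈ children 𝒯 P) = ∅ := by
    rw [Finset.filter_eq_empty_iff]
    intro P hP hmem
    exact (mem_children_iff.1 hmem).2.1.not_subset ((h.2.1 P hP).2)
  rw [hfil, Finset.biUnion_empty]

lemma sibling_structure {V : Finset ι} {𝒯 : Finset (Finset ι)} (h : IsHierarchy V 𝒯)
    (hbin : IsBinary 𝒯) {C : Finset ι} (hC : C ∈ 𝒯) (hCV : C ≠ V) :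
    ∃ P ∈ 𝒯, ∃ D₂ ∈ 𝒯, siblings 𝒯 C = {D₂} ∧ C ∩ D₂ = ∅ ∧ C ∪ D₂ = P ∧ C ⊂ P := by
  obtain ⟨P, hPmem, hCP⟩ := exists_parent h hC hCV
  obtain ⟨hCmem, hCsP, -⟩ := mem_children_iff.1 hCP
  obtain ⟨D₁, hD₁, D₂, hD₂, hne12, hch, hdisj, huni⟩ := hbin P hPmem ⟨C, hC, hCsP⟩
  have hsib := siblings_eq hPmem hCP
  have hCin : C = D₁ ∨ C = D₂ := by
    have hmem := hCP; rw [hch] at hmem; simpa using hmem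
  rcases hCin with rfl | rfl
  · refine ⟨P, hPmem, D₂, hD₂, ?_, hdisj, huni, hCsP⟩
    rw [hsib, hch]
    ext x
    simp only [mem_erase, mem_insert, mem_singleton]
    constructor
    · rintro ⟨hx, (rfl | rfl)⟩
      · exact absurd rfl hx
      · rfl
    · rintro rfl; exact ⟨fun hxx => hne12 hxx.symm, Or.inr rfl⟩
  · refine ⟨P, hPmem, D₁, hD₁, ?_, by rwa [Finset.inter_comm], by rwa [Finset.union_comm], hCsP⟩
    rw [hsib, hch]
    ext x
    simp only [mem_erase, mem_insert, mem_singleton]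
    constructor
    · rintro ⟨hx, (rfl | rfl)⟩
      · rfl
      · exact absurd rfl hx
    · rintro rfl; exact ⟨hne12, Or.inl rfl⟩

lemma maxNull_spec {𝒯 : Finset (Finset ι)} {S₀ C : Finset ι}
    (h : C ∈ maxNullClusters 𝒯 S₀) :
    C ∈ 𝒯 ∧ C ∩ S₀ = ∅ ∧ ∀ D ∈ 𝒯, D ∩ S₀ = ∅ → ¬ C ⊂ D := by
  unfold maxNullClusters nullClusters at h
  rw [mem_filter, mem_filter] at h
  exact ⟨h.1.1, h.1.2, fun D hD hDn => h.2 D (mem_filter.mpr ⟨hD, hDn⟩)⟩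

lemma maxNull_disjoint {V : Finset ι} {𝒯 : Finset (Finset ι)} {S₀ : Finset ι}
    (h : IsHierarchy V 𝒯) {C C' : Finset ι}
    (hC : C ∈ maxNullClusters 𝒯 S₀) (hC' : C' ∈ maxNullClusters 𝒯 S₀) (hne : C ≠ C') :
    C ∩ C' = ∅ := by
  obtain ⟨hCm, hCn, hCmax⟩ := maxNull_spec hC
  obtain ⟨hC'm, hC'n, hC'max⟩ := maxNull_spec hC'
  by_contra hcon
  rcases hier_nested h hCm hC'm (Finset.nonempty_iff_ne_empty.2 hcon) with h' | h'
  · exact hCmax C' hC'm hC'n (h'.ssubset_of_ne hne)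
  · exact hC'max C hCm hCn (h'.ssubset_of_ne hne.symm)

lemma key_structure {V : Finset ι} {𝒯 : Finset (Finset ι)} {S₀ Shat : Finset ι}
    (h : IsHierarchy V 𝒯) (hbin : IsBinary 𝒯)
    {C : Finset ι} (hC : C ∈ maxNullClusters 𝒯 S₀)
    (hcond : ¬ ∃ E ∈ childrenOfSiblings 𝒯 C, (E ∩ Shat).Nonempty)
    (hne : ((((siblings 𝒯 C).biUnion id) ∩ Shat)).Nonempty) :
    ∃ P ∈ 𝒯, ∃ D₂ ∈ 𝒯, (siblings 𝒯 C).biUnion id = D₂ ∧ C ∩ D₂ = ∅ ∧ C ∪ D₂ = P ∧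
      (D₂ ∩ S₀).Nonempty ∧ ∀ E ∈ 𝒯, ¬ E ⊂ D₂ := by
  obtain ⟨hCm, hCn, hCmax⟩ := maxNull_spec hC
  have hCV : C ≠ V := by
    rintro rfl
    rw [siblings_V h] at hne
    simp at hne
  obtain ⟨P, hPm, D₂, hD₂m, hsib, hdisj, huni, hssub⟩ := sibling_structure h hbin hCm hCV
  have hbi : (siblings 𝒯 C).biUnion id = D₂ := by rw [hsib, singleton_biUnion]; rfl
  refine ⟨P, hPm, D₂, hD₂m, hbi, hdisj, huni, ?_, ?_⟩
  · rw [Finset.nonempty_iff_ne_empty]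
    intro hnull
    exact hCmax P hPm (by rw [← huni, Finset.union_inter_distrib_right, hCn, hnull,
      Finset.union_empty]) hssub
  · intro E hE hEsub
    obtain ⟨E₁, hE₁, E₂, hE₂, hne12, hch, hd12, hu12⟩ := hbin D₂ hD₂m ⟨E, hE, hEsub⟩
    have hmem₁ : E₁ ∈ childrenOfSiblings 𝒯 C := by
      rw [childrenOfSiblings, hsib, singleton_biUnion, hch]; simp
    have hmem₂ : E₂ ∈ childrenOfSiblings 𝒯 C := by
      rw [childrenOfSiblings, hsib, singleton_biUnion, hch]; simp
    have h1 : E₁ ∩ Shat = ∅ := by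
      by_contra hcc
      exact hcond ⟨E₁, hmem₁, Finset.nonempty_iff_ne_empty.2 hcc⟩
    have h2 : E₂ ∩ Shat = ∅ := by
      by_contra hcc
      exact hcond ⟨E₂, hmem₂, Finset.nonempty_iff_ne_empty.2 hcc⟩
    rw [hbi] at hne
    have hD₂e : D₂ ∩ Shat = ∅ := by
      rw [← hu12, Finset.union_inter_distrib_right, h1, h2, Finset.union_empty]
    rw [hD₂e] at hne
    simp at hne

/-- The auxiliary "occupied set" for each cluster. -/
def gset (𝒯 : Finset (Finset ι)) (Shat C : Finset ι) : Finset ι :=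
  if ∃ E ∈ childrenOfSiblings 𝒯 C, (E ∩ Shat).Nonempty then C ∩ Shat
  else (C ∩ Shat) ∪ (((siblings 𝒯 C).biUnion id) ∩ Shat)

lemma gset_subset {𝒯 : Finset (Finset ι)} {Shat C : Finset ι} :
    gset 𝒯 Shat C ⊆ Shat := by
  rw [gset]
  split
  · exact Finset.inter_subset_right
  · exact Finset.union_subset Finset.inter_subset_right Finset.inter_subset_right

lemma mem_gset {𝒯 : Finset (Finset ι)} {Shat C : Finset ι} {x : ι}
    (hx : x ∈ gset 𝒯 Shat C) :
    x ∈ C ∩ Shat ∨ ((¬ ∃ E ∈ childrenOfSiblings 𝒯 C, (E ∩ Shat).Nonempty) ∧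
      x ∈ ((siblings 𝒯 C).biUnion id) ∩ Shat) := by
  rw [gset] at hx
  split_ifs at hx with hcond
  · exact Or.inl hx
  · rcases Finset.mem_union.1 hx with hx | hx
    · exact Or.inl hx
    · exact Or.inr ⟨hcond, hx⟩

lemma effSize_eq_gset {V : Finset ι} {𝒯 : Finset (Finset ι)} {Shat : Finset ι}
    (h : IsHierarchy V 𝒯) (hbin : IsBinary 𝒯) {C : Finset ι} (hC : C ∈ 𝒯) :
    effSize 𝒯 Shat C = (gset 𝒯 Shat C).card := by
  have hdisj : Disjoint C ((siblings 𝒯 C).biUnion id) := by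
    by_cases hCV : C = V
    · subst hCV
      rw [siblings_V h, Finset.biUnion_empty]
      exact Finset.disjoint_empty_right C
    · obtain ⟨P, hPm, D₂, hD₂m, hsib, hd, -, -⟩ := sibling_structure h hbin hC hCV
      have : (siblings 𝒯 C).biUnion id = D₂ := by rw [hsib, singleton_biUnion]; rfl
      rw [this, Finset.disjoint_iff_inter_eq_empty]
      exact hd
  rw [effSize, gset]
  split_ifs
  · rfl
  · rw [Finset.card_union_of_disjoint
      (hdisj.mono Finset.inter_subset_left Finset.inter_subset_left)]

end Aux

/-- **Shaffer bound** (key combinatorial step for Theorem 2 of Mandozzi–Bühlmann):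
in a binary hierarchy, the effective cluster sizes (restricted to a nonempty screened
set `Shat`) of the maximal null clusters meeting `Shat` sum to at most `|Shat|`. -/
theorem sum_effSize_le
    {ι : Type*} [DecidableEq ι] (V S₀ : Finset ι) (𝒯 : Finset (Finset ι))
    (h𝒯 : IsHierarchy V 𝒯) (hbin : IsBinary 𝒯) (hS₀ : S₀ ⊆ V)
    (Shat : Finset ι) (hShatne : Shat.Nonempty) (hShatV : Shat ⊆ V) :
    ∑ C ∈ (maxNullClusters 𝒯 S₀).filter (fun C => (C ∩ Shat).Nonempty),
      effSize 𝒯 Shat C ≤ Shat.card := by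
  classical
  set M := (maxNullClusters 𝒯 S₀).filter (fun C => (C ∩ Shat).Nonempty) with hMdef
  have hmemM : ∀ C ∈ M, C ∈ maxNullClusters 𝒯 S₀ := fun C hC => (mem_filter.1 hC).1
  -- key cross disjointness fact: a max null cluster can't meet the
  -- (minimal, non-null) sibling produced by `key_structure` for another cluster
  have hcross : ∀ C ∈ M, ∀ C' ∈ M, C ≠ C' →
      ∀ x : ι, x ∈ C ∩ Shat →
      (¬ ∃ E ∈ childrenOfSiblings 𝒯 C', (E ∩ Shat).Nonempty) →
      x ∈ ((siblings 𝒯 C').biUnion id) ∩ Shat → False := by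
    intro C hCM C' hC'M hne x hxC hcond' hxS
    obtain ⟨P', hP'm, D₂', hD₂'m, hbi', hd', hu', hnn', hmin'⟩ :=
      key_structure h𝒯 hbin (hmemM C' hC'M) hcond' ⟨x, hxS⟩
    rw [hbi'] at hxS
    obtain ⟨hCm, hCn, hCmax⟩ := maxNull_spec (hmemM C hCM)
    have hxint : x ∈ C ∩ D₂' :=
      mem_inter.2 ⟨(mem_inter.1 hxC).1, (mem_inter.1 hxS).1⟩
    rcases hier_nested h𝒯 hCm hD₂'m ⟨x, hxint⟩ with hsub | hsub
    · rcases hsub.eq_or_ssubset with heq | hss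
      · obtain ⟨y, hy⟩ := hnn'
        rw [← heq] at hy
        have : y ∈ C ∩ S₀ := hy
        rw [hCn] at this
        simp at this
      · exact hmin' C hCm hss
    · obtain ⟨y, hy⟩ := hnn'
      have : y ∈ C ∩ S₀ := mem_inter.2 ⟨hsub (mem_inter.1 hy).1, (mem_inter.1 hy).2⟩
      rw [hCn] at this
      simp at this
  have hdisj : ∀ C ∈ M, ∀ C' ∈ M, C ≠ C' →
      Disjoint (gset 𝒯 Shat C) (gset 𝒯 Shat C') := by
    intro C hCM C' hC'M hne
    rw [Finset.disjoint_left]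
    intro x hx hx'
    rcases mem_gset hx with hx1 | ⟨hcond, hx2⟩ <;>
      rcases mem_gset hx' with hx1' | ⟨hcond', hx2'⟩
    · -- x ∈ C ∩ C'
      have hCC' := maxNull_disjoint h𝒯 (hmemM C hCM) (hmemM C' hC'M) hne
      have : x ∈ C ∩ C' :=
        mem_inter.2 ⟨(mem_inter.1 hx1).1, (mem_inter.1 hx1').1⟩
      rw [hCC'] at this; simp at this
    · exact hcross C hCM C' hC'M hne x hx1 hcond' hx2'
    · exact hcross C' hC'M C hCM hne.symm x hx1' hcond hx2
    · -- x in both sibling parts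
      obtain ⟨P, hPm, D₂, hD₂m, hbi, hd, hu, hnn, hmin⟩ :=
        key_structure h𝒯 hbin (hmemM C hCM) hcond ⟨x, hx2⟩
      obtain ⟨P', hP'm, D₂', hD₂'m, hbi', hd', hu', hnn', hmin'⟩ :=
        key_structure h𝒯 hbin (hmemM C' hC'M) hcond' ⟨x, hx2'⟩
      rw [hbi] at hx2
      rw [hbi'] at hx2'
      have hD2ne : D₂ ≠ D₂' := by
        rintro rfl
        -- P = C ∪ D₂ and P' = C' ∪ D₂ are nested; either way C or C' is empty
        obtain ⟨y, hy⟩ := hnn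
        have hyP1 : y ∈ P := by
          rw [← hu]; exact Finset.mem_union_right _ (mem_inter.1 hy).1
        have hyP2 : y ∈ P' := by
          rw [← hu']; exact Finset.mem_union_right _ (mem_inter.1 hy).1
        have hyP : y ∈ P ∩ P' := mem_inter.2 ⟨hyP1, hyP2⟩
        have hCC' := maxNull_disjoint h𝒯 (hmemM C hCM) (hmemM C' hC'M) hne
        obtain ⟨hCm, hCn, -⟩ := maxNull_spec (hmemM C hCM)
        obtain ⟨hC'm, hC'n, -⟩ := maxNull_spec (hmemM C' hC'M)
        rcases hier_nested h𝒯 hPm hP'm ⟨y, hyP⟩ with hsub | hsub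
        · obtain ⟨z, hz⟩ := (h𝒯.2.1 C hCm).1
          have hzP' : z ∈ C' ∪ D₂ := by
            rw [hu']
            exact hsub (by rw [← hu]; exact Finset.mem_union_left _ hz)
          rcases Finset.mem_union.1 hzP' with hz' | hz'
          · have : z ∈ C ∩ C' := mem_inter.2 ⟨hz, hz'⟩
            rw [hCC'] at this; simp at this
          · have : z ∈ C ∩ D₂ := mem_inter.2 ⟨hz, hz'⟩
            rw [hd] at this; simp at this
        · obtain ⟨z, hz⟩ := (h𝒯.2.1 C' hC'm).1
          have hzP : z ∈ C ∪ D₂ := by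
            rw [hu]
            exact hsub (by rw [← hu']; exact Finset.mem_union_left _ hz)
          rcases Finset.mem_union.1 hzP with hz' | hz'
          · have : z ∈ C ∩ C' := mem_inter.2 ⟨hz', hz⟩
            rw [hCC'] at this; simp at this
          · have : z ∈ C' ∩ D₂ := mem_inter.2 ⟨hz, hz'⟩
            rw [hd'] at this; simp at this
      have hxint : x ∈ D₂ ∩ D₂' :=
        mem_inter.2 ⟨(mem_inter.1 hx2).1, (mem_inter.1 hx2').1⟩
      rcases hier_nested h𝒯 hD₂m hD₂'m ⟨x, hxint⟩ with hsub | hsub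
      · exact hmin' D₂ hD₂m (hsub.ssubset_of_ne hD2ne)
      · exact hmin D₂' hD₂'m (hsub.ssubset_of_ne hD2ne.symm)
  calc ∑ C ∈ M, effSize 𝒯 Shat C
      = ∑ C ∈ M, (gset 𝒯 Shat C).card :=
        Finset.sum_congr rfl (fun C hC =>
          effSize_eq_gset h𝒯 hbin (maxNull_spec (hmemM C hC)).1)
    _ = (M.biUnion (gset 𝒯 Shat)).card := (Finset.card_biUnion hdisj).symm
    _ ≤ Shat.card := Finset.card_le_card (by
        intro x hx
        obtain ⟨C, -, hxC⟩ := Finset.mem_biUnion.1 hx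
        exact gset_subset hxC)
end

section
/- Let α ∈ (0,1) and γ_min ∈ (0,1). Then ∫₀¹ sup{𝟙{u ≤ αγ}/γ : γ ∈ (γ_min, 1)} du = α·(1 − log γ_min), where the integral is Lebesgue integration over u ∈ [0,1]. Equivalently, if U is a random variable uniformly distributed on [0,1], then E[sup_{γ ∈ (γ_min,1)} 𝟙{U ≤ αγ}/γ] = α·(1 − log γ_min). -/
/-!
For fixed `u`, the quantity `𝟙{u ≤ αγ}/γ` is largest at the smallest admissible `γ`. If
`u ≤ α γmin` every `γ ∈ (γmin, 1)` is admissible and the supremum is `1/γmin` (not attained);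
if `α γmin < u < α` it is attained at `γ = u/α` and equals `α/u`; if `u ≥ α` nothing is
admissible and it is `0`. Integrating this profile over `[0,1]` gives
`α γmin · γmin⁻¹ + ∫_{α γmin}^{α} α/u du = α - α log γmin`.
-/

open MeasureTheory Set

namespace IndicatorDivSup

noncomputable def indicatorDiv (α u γ : ℝ) : ℝ := (if u ≤ α * γ then 1 else 0) / γ

noncomputable def profile (α γmin u : ℝ) : ℝ :=
  if u ≤ α * γmin then γmin⁻¹ else if u < α then α / u else 0

variable {α γmin u : ℝ}

lemma image_indicatorDiv_of_le (hα : 0 ≤ α) (hγmin : 0 < γmin) (hu : u ≤ α * γmin) :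
    indicatorDiv α u '' Ioo γmin 1 = Ioo 1 γmin⁻¹ := by
  have admissible : ∀ γ, γmin < γ → indicatorDiv α u γ = γ⁻¹ := fun γ hγ => by
    rw [indicatorDiv, if_pos (hu.trans (by gcongr)), one_div]
  ext y
  constructor
  · rintro ⟨γ, ⟨hγmin_lt, hγ_lt⟩, rfl⟩
    rw [admissible γ hγmin_lt]
    exact ⟨one_lt_inv₀ (hγmin.trans hγmin_lt) |>.2 hγ_lt, inv_strictAnti₀ hγmin hγmin_lt⟩
  · rintro ⟨hy_gt, hy_lt⟩
    have hy : 0 < y := one_pos.trans hy_gt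
    have hγmin_lt : γmin < y⁻¹ := (lt_inv_comm₀ hγmin hy).2 hy_lt
    exact ⟨y⁻¹, ⟨hγmin_lt, inv_lt_one_of_one_lt₀ hy_gt⟩, by rw [admissible _ hγmin_lt, inv_inv]⟩

lemma isGreatest_image_indicatorDiv (hα : 0 < α) (hγmin : 0 < γmin)
    (hu_gt : α * γmin < u) (hu_lt : u < α) :
    IsGreatest (indicatorDiv α u '' Ioo γmin 1) (α / u) := by
  have hu : 0 < u := (by positivity : 0 < α * γmin).trans hu_gt
  refine ⟨⟨u / α, ⟨?_, (div_lt_one hα).2 hu_lt⟩, ?_⟩, ?_⟩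
  · rwa [lt_div_iff₀ hα, mul_comm]
  · rw [indicatorDiv, if_pos (by rw [mul_div_cancel₀ _ hα.ne']), one_div, inv_div]
  · rintro _ ⟨γ, ⟨hγmin_lt, -⟩, rfl⟩
    have hγ : 0 < γ := hγmin.trans hγmin_lt
    unfold indicatorDiv
    split_ifs
    · rwa [div_le_div_iff₀ hγ hu, one_mul]
    · rw [zero_div]; positivity

lemma image_indicatorDiv_of_ge (hα : 0 < α) (hγmin : γmin < 1) (hu : α ≤ u) :
    indicatorDiv α u '' Ioo γmin 1 = {0} := by
  have inadmissible : ∀ γ < 1, indicatorDiv α u γ = 0 := fun γ hγ => by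
    rw [indicatorDiv, if_neg (by nlinarith), zero_div]
  rw [image_congr fun γ hγ => inadmissible γ hγ.2, (nonempty_Ioo.2 hγmin).image_const]

theorem sSup_image_indicatorDiv (hα : 0 < α) (hγmin : γmin ∈ Ioo 0 1) (u : ℝ) :
    sSup (indicatorDiv α u '' Ioo γmin 1) = profile α γmin u := by
  obtain ⟨hγmin_pos, hγmin_lt⟩ := hγmin
  unfold profile
  split_ifs with h_le h_lt
  · rw [image_indicatorDiv_of_le hα.le hγmin_pos h_le,
      csSup_Ioo ((one_lt_inv₀ hγmin_pos).2 hγmin_lt)]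
  · exact (isGreatest_image_indicatorDiv hα hγmin_pos (not_le.1 h_le) h_lt).csSup_eq
  · rw [image_indicatorDiv_of_ge hα hγmin_lt (not_lt.1 h_lt), csSup_singleton]

lemma measurable_profile : Measurable (profile α γmin) :=
  Measurable.ite measurableSet_Iic measurable_const <|
    Measurable.ite measurableSet_Iio (measurable_const.div measurable_id) measurable_const

lemma abs_profile_le (hα : 0 < α) (hγmin : 0 < γmin) (u : ℝ) :
    |profile α γmin u| ≤ γmin⁻¹ := by
  unfold profile
  split_ifs with h_le h_lt
  · rw [abs_of_pos (inv_pos.2 hγmin)]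
  · have hu : 0 < u := (by positivity : 0 < α * γmin).trans (not_le.1 h_le)
    rw [abs_of_pos (div_pos hα hu), div_le_iff₀ hu, inv_mul_eq_div, le_div_iff₀ hγmin]
    exact (not_le.1 h_le).le
  · rw [abs_zero]; positivity

lemma intervalIntegrable_profile (hα : 0 < α) (hγmin : 0 < γmin) (a b : ℝ) :
    IntervalIntegrable (profile α γmin) volume a b :=
  (intervalIntegrable_const (c := γmin⁻¹)).mono_fun' measurable_profile.aestronglyMeasurable
    (ae_of_all _ (abs_profile_le hα hγmin))

lemma intervalIntegral_profile_zero_left (hα : 0 ≤ α) (hγmin : 0 < γmin) :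
    ∫ u in (0 : ℝ)..α * γmin, profile α γmin u = α := by
  have h_const : EqOn (profile α γmin) (fun _ => γmin⁻¹) (uIcc 0 (α * γmin)) := fun u hu => by
    rw [uIcc_of_le (by positivity)] at hu
    exact if_pos hu.2
  rw [intervalIntegral.integral_congr h_const, intervalIntegral.integral_const, smul_eq_mul,
    sub_zero, mul_inv_cancel_right₀ hγmin.ne']

lemma intervalIntegral_profile_middle (hα : 0 < α) (hγmin : γmin ∈ Ioc 0 1) :
    ∫ u in α * γmin..α, profile α γmin u = -(α * Real.log γmin) := by
  obtain ⟨hγmin_pos, hγmin_le⟩ := hγmin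
  have h_lt : 0 < α * γmin := by positivity
  have h_le : α * γmin ≤ α := mul_le_of_le_one_right hα.le hγmin_le
  have h_inv : ∫ u in α * γmin..α, profile α γmin u = ∫ u in α * γmin..α, α * u⁻¹ := by
    rw [intervalIntegral.integral_of_le h_le, intervalIntegral.integral_of_le h_le,
      integral_Ioc_eq_integral_Ioo, integral_Ioc_eq_integral_Ioo]
    refine setIntegral_congr_fun measurableSet_Ioo fun u hu => ?_
    rw [profile, if_neg (not_le.2 hu.1), if_pos hu.2, div_eq_mul_inv]
  rw [h_inv, intervalIntegral.integral_const_mul, integral_inv (notMem_uIcc_of_lt h_lt hα),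
    div_mul_cancel_left₀ hα.ne', Real.log_inv, mul_neg]

lemma intervalIntegral_profile_one_right (hα : 0 < α) (hγmin : γmin < 1) (hα_le : α ≤ 1) :
    ∫ u in α..1, profile α γmin u = 0 := by
  have h_zero : EqOn (profile α γmin) (fun _ => 0) (uIcc α 1) := fun u hu => by
    rw [uIcc_of_le hα_le] at hu
    have : α * γmin < u := (mul_lt_of_lt_one_right hα hγmin).trans_le hu.1
    rw [profile, if_neg (not_le.2 this), if_neg (not_lt.2 hu.1)]
  rw [intervalIntegral.integral_congr h_zero, intervalIntegral.integral_zero]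

theorem setIntegral_Icc_profile (hα : α ∈ Ioc 0 1) (hγmin : γmin ∈ Ioo 0 1) :
    ∫ u in Icc (0 : ℝ) 1, profile α γmin u = α * (1 - Real.log γmin) := by
  obtain ⟨hα_pos, hα_le⟩ := hα
  obtain ⟨hγmin_pos, hγmin_lt⟩ := hγmin
  have hint := intervalIntegrable_profile hα_pos hγmin_pos
  rw [integral_Icc_eq_integral_Ioc, ← intervalIntegral.integral_of_le zero_le_one,
    ← intervalIntegral.integral_add_adjacent_intervals (hint 0 (α * γmin)) (hint _ 1),
    ← intervalIntegral.integral_add_adjacent_intervals (hint (α * γmin) α) (hint α 1),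
    intervalIntegral_profile_zero_left hα_pos.le hγmin_pos,
    intervalIntegral_profile_middle hα_pos ⟨hγmin_pos, hγmin_lt.le⟩,
    intervalIntegral_profile_one_right hα_pos hγmin_lt hα_le]
  ring

end IndicatorDivSup

open IndicatorDivSup in
theorem integral_sSup_indicator_div_general
    {α γmin : ℝ} (hα : α ∈ Set.Ioo (0 : ℝ) 1) (hγmin : γmin ∈ Set.Ioo (0 : ℝ) 1)
    {Ω : Type*} [MeasurableSpace Ω] (ℙ : Measure Ω)
    (U : Ω → ℝ)
    (hU : Measure.map U ℙ = volume.restrict (Set.Icc (0 : ℝ) 1)) :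
    (∫ u in Set.Icc (0 : ℝ) 1,
        sSup ((fun γ => (if u ≤ α * γ then (1 : ℝ) else 0) / γ) '' Set.Ioo γmin 1)
      = α * (1 - Real.log γmin))
    ∧ (∫ ω, sSup ((fun γ => (if U ω ≤ α * γ then (1 : ℝ) else 0) / γ) '' Set.Ioo γmin 1) ∂ℙ
      = α * (1 - Real.log γmin)) := by
  have h_sup : ∀ u, sSup ((fun γ => (if u ≤ α * γ then (1 : ℝ) else 0) / γ) '' Ioo γmin 1) =
      profile α γmin u :=
    sSup_image_indicatorDiv hα.1 hγmin
  have h_int : ∫ u in Icc (0 : ℝ) 1, profile α γmin u = α * (1 - Real.log γmin) :=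
    setIntegral_Icc_profile (Ioo_subset_Ioc_self hα) hγmin
  have hU_ae : AEMeasurable U ℙ := AEMeasurable.of_map_ne_zero <| by
    rw [hU, Ne, Measure.restrict_eq_zero, Real.volume_Icc]
    norm_num
  refine ⟨by simpa only [← h_sup] using h_int, ?_⟩
  rw [funext fun ω => h_sup (U ω),
    ← integral_map hU_ae measurable_profile.aestronglyMeasurable, hU, h_int]

/-- **The uniform integral identity** (Mandozzi–Bühlmann, proof of Theorem 1,
second assertion): `∫₀¹ sup_{γ ∈ (γ_min,1)} 𝟙{u ≤ αγ}/γ du = α (1 − log γ_min)`;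
equivalently, for `U` uniformly distributed on `[0,1]`,
`E[sup_{γ ∈ (γ_min,1)} 𝟙{U ≤ αγ}/γ] = α (1 − log γ_min)`. -/
theorem integral_sSup_indicator_div
    {α γmin : ℝ} (hα : α ∈ Set.Ioo (0 : ℝ) 1) (hγmin : γmin ∈ Set.Ioo (0 : ℝ) 1)
    {Ω : Type*} [MeasurableSpace Ω] (ℙ : Measure Ω) [IsProbabilityMeasure ℙ]
    (U : Ω → ℝ) (hUmeas : Measurable U)
    (hU : Measure.map U ℙ = volume.restrict (Set.Icc (0 : ℝ) 1)) :
    (∫ u in Set.Icc (0 : ℝ) 1,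
        sSup ((fun γ => (if u ≤ α * γ then (1 : ℝ) else 0) / γ) '' Set.Ioo γmin 1)
      = α * (1 - Real.log γmin))
    ∧ (∫ ω, sSup ((fun γ => (if U ω ≤ α * γ then (1 : ℝ) else 0) / γ) '' Set.Ioo γmin 1) ∂ℙ
      = α * (1 - Real.log γmin)) :=
  integral_sSup_indicator_div_general hα hγmin ℙ U hU
end

section
/- Let 0 < s < n, m ≥ 1, 1 ≤ q < s, and let M be a real n×s matrix with rank(MᵀM) = s, N a real n×m matrix, σ > 0, and constants C₁, C₂, C₃ > 0. Assume: (i) every column x of the matrix [M N] satisfies ‖x‖₂² ≤ C₁·n; (ii) every entry of (MᵀM)⁻¹ has absolute value at most C₂/n; (iii) A is a q×s matrix with A_{jj} ∈ {0,1} for all j and A_{jk} = 0 for j ≠ k, W := A(MᵀM)⁻¹Aᵀ is positive definite, and every entry of W^{−1/2} has absolute value at most C₃·√n. Let η ∈ ℝᵐ satisfy ‖η‖_∞ ≤ u and have at most s_small nonzero entries. Then the noncentrality parameter λ := ‖BIAS‖₂², with BIAS := σ⁻¹·W^{−1/2}·A(MᵀM)⁻¹MᵀNη, satisfies λ ≤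 ((C₁·C₂·C₃/σ)·s^{5/2}·n^{1/2}·s_small·u)². -/
open Matrix

open scoped ComplexOrder in
/-- The square root of a positive semidefinite matrix, as defined in the older Mathlib
(`Matrix.PosSemidef.sqrt`, removed since). -/
noncomputable def Matrix.PosSemidef.sqrt {n 𝕜 : Type*} [Fintype n] [DecidableEq n] [RCLike 𝕜]
    {A : Matrix n n 𝕜} (hA : A.PosSemidef) : Matrix n n 𝕜 :=
  hA.1.eigenvectorUnitary.1 * diagonal ((↑) ∘ (√·) ∘ hA.1.eigenvalues) *
  (star hA.1.eigenvectorUnitary : Matrix n n 𝕜)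

/-!
Follow a vector through the product `W^{-1/2} A (MᵀM)⁻¹ MᵀN η` factor by factor, bounding the
sup norm at each step. By Cauchy–Schwarz the entries of `MᵀN` are at most `C₁ n`, and since `η`
has at most `s_small` nonzero entries, `‖MᵀN η‖_∞ ≤ C₁ n s_small u`. Multiplying by `(MᵀM)⁻¹`
costs a factor `s C₂ / n`, by `A` nothing (each row has a single entry in `{0, 1}`), and by
`W^{-1/2}` a factor `q C₃ √n`. The sum of the `q` squared entries then gives the bound, with
`q ≤ s`.
-/

namespace Matrix

open Finset

variable {ι κ : Type*} [Fintype κ]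

theorem abs_mulVec_apply_le_of_support_subset {B : Matrix ι κ ℝ} {v : κ → ℝ} {c d : ℝ}
    (t : Finset κ) (hvt : ∀ k ∉ t, v k = 0) (hB : ∀ j k, |B j k| ≤ c) (hv : ∀ k, |v k| ≤ d)
    (j : ι) : |(B *ᵥ v) j| ≤ #t * (c * d) := by
  have hsum : (B *ᵥ v) j = ∑ k ∈ t, B j k * v k :=
    (sum_subset (subset_univ t) fun k _ hk ↦ by rw [hvt k hk, mul_zero]).symm
  calc |(B *ᵥ v) j| ≤ ∑ k ∈ t, |B j k * v k| := hsum ▸ abs_sum_le_sum_abs _ _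
    _ ≤ ∑ _k ∈ t, c * d := sum_le_sum fun k _ ↦ by
        rw [abs_mul]
        exact mul_le_mul (hB j k) (hv k) (abs_nonneg _) ((abs_nonneg _).trans (hB j k))
    _ = #t * (c * d) := by rw [sum_const, nsmul_eq_mul]

theorem abs_mulVec_apply_le {B : Matrix ι κ ℝ} {v : κ → ℝ} {c d : ℝ}
    (hB : ∀ j k, |B j k| ≤ c) (hv : ∀ k, |v k| ≤ d) (j : ι) :
    |(B *ᵥ v) j| ≤ Fintype.card κ * (c * d) :=
  abs_mulVec_apply_le_of_support_subset univ (fun k hk ↦ absurd (mem_univ k) hk) hB hv j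

theorem abs_mulVec_apply_le_of_support_card_le {B : Matrix ι κ ℝ} {v : κ → ℝ} {c d : ℝ} {S : ℕ}
    (hB : ∀ j k, |B j k| ≤ c) (hv : ∀ k, |v k| ≤ d) (hS : #{k | v k ≠ 0} ≤ S) (hcd : 0 ≤ c * d)
    (j : ι) : |(B *ᵥ v) j| ≤ S * (c * d) := by
  calc |(B *ᵥ v) j| ≤ #{k | v k ≠ 0} * (c * d) :=
        abs_mulVec_apply_le_of_support_subset _ (fun k hk ↦ by simpa using hk) hB hv j
    _ ≤ S * (c * d) := by gcongr

theorem abs_mulVec_apply_le_of_row_eq_single {B : Matrix ι κ ℝ} (w : κ → ℝ) {j : ι} (k₀ : κ)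
    (hB : ∀ k, k ≠ k₀ → B j k = 0) (hk₀ : |B j k₀| ≤ 1) : |(B *ᵥ w) j| ≤ |w k₀| := by
  have hrow : (B *ᵥ w) j = B j k₀ * w k₀ :=
    sum_eq_single k₀ (fun k _ hk ↦ by simp [hB k hk]) fun h ↦ absurd (mem_univ k₀) h
  rw [hrow, abs_mul]
  exact mul_le_of_le_one_left (abs_nonneg _) hk₀

theorem abs_transpose_mul_apply_le {m n p : Type*} [Fintype m] {M : Matrix m n ℝ}
    {N : Matrix m p ℝ} {a : n} {b : p} {c : ℝ} (hM : ∑ i, M i a ^ 2 ≤ c)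
    (hN : ∑ i, N i b ^ 2 ≤ c) : |(Mᵀ * N) a b| ≤ c := by
  have hc : 0 ≤ c := (sum_nonneg fun i _ ↦ sq_nonneg (M i a)).trans hM
  refine abs_le_of_sq_le_sq ?_ hc
  calc ((Mᵀ * N) a b) ^ 2 = (∑ i, M i a * N i b) ^ 2 := by simp only [mul_apply, transpose_apply]
    _ ≤ (∑ i, M i a ^ 2) * ∑ i, N i b ^ 2 := sum_mul_sq_le_sq_mul_sq _ _ _
    _ ≤ c ^ 2 := by rw [sq]; gcongr

end Matrix

theorem sum_sq_le_card_mul_sq {ι : Type*} [Fintype ι] {x : ι → ℝ} {b : ℝ}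
    (hx : ∀ i, |x i| ≤ b) : ∑ i, x i ^ 2 ≤ Fintype.card ι * b ^ 2 := by
  calc ∑ i, x i ^ 2 ≤ ∑ _i : ι, b ^ 2 :=
        Finset.sum_le_sum fun i _ ↦ sq_le_sq' (abs_le.mp (hx i)).1 (abs_le.mp (hx i)).2
    _ = Fintype.card ι * b ^ 2 := by simp

theorem noncentrality_bound_general
    (n s m q : ℕ) (hsn : s < n) (hm : 1 ≤ m) (hqs : q < s)
    (M : Matrix (Fin n) (Fin s) ℝ)
    (N : Matrix (Fin n) (Fin m) ℝ)
    {σ : ℝ}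
    {C₁ C₂ C₃ : ℝ} (hC₁ : 0 < C₁) (hC₂ : 0 < C₂) (hC₃ : 0 < C₃)
    (hMcol : ∀ j : Fin s, ∑ i, (M i j) ^ 2 ≤ C₁ * n)
    (hNcol : ∀ j : Fin m, ∑ i, (N i j) ^ 2 ≤ C₁ * n)
    (hGram : ∀ j k : Fin s, |((Mᵀ * M)⁻¹) j k| ≤ C₂ / n)
    (A : Matrix (Fin q) (Fin s) ℝ)
    (hAdiag : ∀ j : Fin q,
      A j (Fin.castLE hqs.le j) = 0 ∨ A j (Fin.castLE hqs.le j) = 1)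
    (hAoff : ∀ (j : Fin q) (k : Fin s), (j : ℕ) ≠ (k : ℕ) → A j k = 0)
    (hW : (A * (Mᵀ * M)⁻¹ * Aᵀ).PosDef)
    (hWhalf : ∀ j k : Fin q, |((Matrix.PosSemidef.sqrt hW.posSemidef)⁻¹) j k| ≤ C₃ * Real.sqrt n)
    {u : ℝ} (η : Fin m → ℝ) (hη : ∀ i, |η i| ≤ u)
    (sSmall : ℕ) (hsmall : (Finset.univ.filter (fun i => η i ≠ 0)).card ≤ sSmall) :
    ∑ i, ((σ⁻¹ • (((Matrix.PosSemidef.sqrt hW.posSemidef)⁻¹ * A * (Mᵀ * M)⁻¹ * Mᵀ * N).mulVec η)) i) ^ 2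
      ≤ ((C₁ * C₂ * C₃ / σ) * (s : ℝ) ^ ((5 : ℝ) / 2) * (n : ℝ) ^ ((1 : ℝ) / 2)
          * (sSmall : ℝ) * u) ^ 2 := by
  have hn : (0 : ℝ) < n := by exact_mod_cast Nat.zero_lt_of_lt hsn
  have hu : 0 ≤ u := (abs_nonneg _).trans (hη ⟨0, hm⟩)
  set b := sSmall * (C₁ * n * u) with hb
  have hMN : ∀ a, |((Mᵀ * N) *ᵥ η) a| ≤ b :=
    abs_mulVec_apply_le_of_support_card_le
      (fun a k ↦ abs_transpose_mul_apply_le (hMcol a) (hNcol k)) hη hsmall (by positivity)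
  have hG : ∀ a, |((Mᵀ * M)⁻¹ *ᵥ (Mᵀ * N) *ᵥ η) a| ≤ s * (C₂ / n * b) := by
    simpa using abs_mulVec_apply_le hGram hMN
  have hA : ∀ j, |(A *ᵥ (Mᵀ * M)⁻¹ *ᵥ (Mᵀ * N) *ᵥ η) j| ≤ s * (C₂ / n * b) := fun j ↦
    (abs_mulVec_apply_le_of_row_eq_single _ (Fin.castLE hqs.le j)
      (fun k hk ↦ hAoff j k fun h ↦ hk (Fin.ext h.symm))
      (by rcases hAdiag j with h | h <;> simp [h])).trans (hG _)
  have hP := abs_mulVec_apply_le hWhalf hA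
  have hq_le : (q : ℝ) ≤ s := by exact_mod_cast hqs.le
  have hs_rpow : (s : ℝ) ^ ((5 : ℝ) / 2) = s ^ 2 * √s := by
    rw [Real.sqrt_eq_rpow, ← Real.rpow_natCast, ← Real.rpow_add' (by positivity) (by norm_num)]
    norm_num
  calc ∑ i, ((σ⁻¹ • ((PosSemidef.sqrt hW.posSemidef)⁻¹ * A * (Mᵀ * M)⁻¹ * Mᵀ * N) *ᵥ η) i) ^ 2
      = σ⁻¹ ^ 2 *
          ∑ i, (((PosSemidef.sqrt hW.posSemidef)⁻¹ *ᵥ A *ᵥ (Mᵀ * M)⁻¹ *ᵥ (Mᵀ * N) *ᵥ η) i) ^ 2 := by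
        simp only [mulVec_mulVec, Matrix.mul_assoc, Pi.smul_apply, smul_eq_mul, mul_pow,
          Finset.mul_sum]
    _ ≤ σ⁻¹ ^ 2 * (q * (q * (C₃ * √n * (s * (C₂ / n * b)))) ^ 2) := by
        gcongr
        simpa using sum_sq_le_card_mul_sq hP
    _ ≤ σ⁻¹ ^ 2 * (s * (s * (C₃ * √n * (s * (C₂ / n * b)))) ^ 2) := by gcongr
    _ = _ := by
        rw [hs_rpow, ← Real.sqrt_eq_rpow, hb]
        field_simp
        rw [Real.sq_sqrt (Nat.cast_nonneg s)]
        ring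

/-- **Bound on the noncentrality parameter** (Mandozzi–Bühlmann, Section 5.3):
under the column-norm, Gram-inverse and `W^{-1/2}` entry bounds, and with `η` having
`‖η‖_∞ ≤ u` and at most `s_small` nonzero entries, the noncentrality parameter
`λ = ‖BIAS‖²`, `BIAS = σ⁻¹ W^{-1/2} A (MᵀM)⁻¹ Mᵀ N η`, satisfies
`λ ≤ ((C₁C₂C₃/σ) s^{5/2} n^{1/2} s_small u)²`. -/
theorem noncentrality_bound
    (n s m q : ℕ) (hs : 0 < s) (hsn : s < n) (hm : 1 ≤ m) (hq : 1 ≤ q) (hqs : q < s)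
    (M : Matrix (Fin n) (Fin s) ℝ) (hM : (Mᵀ * M).rank = s)
    (N : Matrix (Fin n) (Fin m) ℝ)
    {σ : ℝ} (hσ : 0 < σ)
    {C₁ C₂ C₃ : ℝ} (hC₁ : 0 < C₁) (hC₂ : 0 < C₂) (hC₃ : 0 < C₃)
    (hMcol : ∀ j : Fin s, ∑ i, (M i j) ^ 2 ≤ C₁ * n)
    (hNcol : ∀ j : Fin m, ∑ i, (N i j) ^ 2 ≤ C₁ * n)
    (hGram : ∀ j k : Fin s, |((Mᵀ * M)⁻¹) j k| ≤ C₂ / n)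
    (A : Matrix (Fin q) (Fin s) ℝ)
    (hAdiag : ∀ j : Fin q,
      A j (Fin.castLE hqs.le j) = 0 ∨ A j (Fin.castLE hqs.le j) = 1)
    (hAoff : ∀ (j : Fin q) (k : Fin s), (j : ℕ) ≠ (k : ℕ) → A j k = 0)
    (hW : (A * (Mᵀ * M)⁻¹ * Aᵀ).PosDef)
    (hWhalf : ∀ j k : Fin q, |((Matrix.PosSemidef.sqrt hW.posSemidef)⁻¹) j k| ≤ C₃ * Real.sqrt n)
    {u : ℝ} (η : Fin m → ℝ) (hη : ∀ i, |η i| ≤ u)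
    (sSmall : ℕ) (hsmall : (Finset.univ.filter (fun i => η i ≠ 0)).card ≤ sSmall) :
    ∑ i, ((σ⁻¹ • (((Matrix.PosSemidef.sqrt hW.posSemidef)⁻¹ * A * (Mᵀ * M)⁻¹ * Mᵀ * N).mulVec η)) i) ^ 2
      ≤ ((C₁ * C₂ * C₃ / σ) * (s : ℝ) ^ ((5 : ℝ) / 2) * (n : ℝ) ^ ((1 : ℝ) / 2)
          * (sSmall : ℝ) * u) ^ 2 :=
  noncentrality_bound_general n s m q hsn hm hqs M N hC₁ hC₂ hC₃ hMcol hNcol hGram A hAdiag hAoff hW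
    hWhalf η hη sSmall hsmall
end
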